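/- In the odd graph complex, every δ_o-closed element of D_o^{1,0} is zero (the unique decorated graph of order 1 and degree 0 is the chord diagram with one chord, and it is not δ_o-closed); in the even graph complex, D_e^{1,0} = 0 (the unique order-1 chord diagram of even type equals minus itself under the cyclic relabelling of its two external vertices, hence vanishes). Consequently H^{1,0}(D_o) = 0 and H^{1,0}(D_e) = 0. -/
import Mathlib


open scoped Classical

/-!
# Vanishing of the graph complexes in order 1 and degree 0

This file constructs the odd graph complex `(D_o, δ_o)` and the even graph complex
`(D_e, δ_e)` of the paper, and states that every `δ_o`-closed element of `D_o^{1,0}` is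
zero, and that `D_e^{1,0} = 0`; consequently `H^{1,0}(D_o) = 0` and `H^{1,0}(D_e) = 0`.
See the documentation of the individual definitions below for the encoding conventions
(labels are 0-indexed, external vertex labels `0,…,ve-1` lie on the circle in this cyclic
order, internal labels are `ve,…,ve+vi-1`).
-/

structure OEdge where
  src : ℕ
  tgt : ℕ
  lp : Bool
deriving DecidableEq

/-- A decorated graph of odd type: `ve` external vertices (labels `0,…,ve-1`, lying on the
oriented circle in this cyclic order), `vi` internal vertices (labels `ve,…,ve+vi-1`), and
a multiset of decorated oriented edges. -/
structure OddGraph where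
  ve : ℕ
  vi : ℕ
  edges : Multiset OEdge
deriving DecidableEq

namespace OddGraph

/-- Total number of vertices. -/
def nv (g : OddGraph) : ℕ := g.ve + g.vi

/-- The valence of a vertex: the number of edge-ends at it. -/
def valence (g : OddGraph) (v : ℕ) : ℕ :=
  (g.edges.map fun e => (if e.src = v then 1 else 0) + (if e.tgt = v then 1 else 0)).sum

/-- Two vertices are adjacent if joined by an edge or if both lie on the circle. -/
def adj (g : OddGraph) (a b : ℕ) : Prop :=
  (∃ e ∈ g.edges, (e.src = a ∧ e.tgt = b) ∨ (e.src = b ∧ e.tgt = a)) ∨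
    (a < g.ve ∧ b < g.ve)

/-- Connectivity of the graph (including the distinguished circle). -/
def Connected (g : OddGraph) : Prop :=
  ∀ a b, a < g.nv → b < g.nv → Relation.ReflTransGen g.adj a b

/-- A valid decorated graph of odd type: edges join actual vertices, non-loop edges carry
no half-edge-ordering bit, internal vertices are at least trivalent, external vertices
carry at least one edge-end, and the graph is connected. -/
def IsValid (g : OddGraph) : Prop :=
  (∀ e ∈ g.edges, e.src < g.nv ∧ e.tgt < g.nv) ∧
  (∀ e ∈ g.edges, e.src ≠ e.tgt → e.lp = false) ∧
  (∀ v, g.ve ≤ v → v < g.nv → 3 ≤ g.valence v) ∧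
  (∀ v, v < g.ve → 1 ≤ g.valence v) ∧
  g.Connected

/-- Number of edges. -/
def numEdges (g : OddGraph) : ℕ := Multiset.card g.edges

/-- The *order* of a graph: `e - v_i`. -/
def ordZ (g : OddGraph) : ℤ := (g.numEdges : ℤ) - (g.vi : ℤ)

/-- The *degree* of a graph: `2e - 3v_i - v_e`. -/
def degZ (g : OddGraph) : ℤ := 2 * (g.numEdges : ℤ) - 3 * (g.vi : ℤ) - (g.ve : ℤ)

/-- A *regular edge*: neither a small loop nor a chord. -/
def isRegular (g : OddGraph) (e : OEdge) : Prop :=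
  e.src ≠ e.tgt ∧ ¬(e.src < g.ve ∧ e.tgt < g.ve)

/-- Two vertices joined by more than one edge. -/
def hasDoubleEdge (g : OddGraph) : Prop :=
  ∃ e ∈ g.edges, ∃ f ∈ g.edges.erase e,
    (f.src = e.src ∧ f.tgt = e.tgt) ∨ (f.src = e.tgt ∧ f.tgt = e.src)

/-- An internal small loop. -/
def hasInternalLoop (g : OddGraph) : Prop :=
  ∃ e ∈ g.edges, e.src = e.tgt ∧ g.ve ≤ e.src

end OddGraph

/-- Vertex relabelling after merging the vertices `i` and `j`: the merged vertex receives
the label `min i j`, and all labels greater than `max i j` are lowered by one. -/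
def mergeMap (i j x : ℕ) : ℕ :=
  if x = i ∨ x = j then min i j else if max i j < x then x - 1 else x

namespace OddGraph

/-- Contraction of a regular edge `e`: the edge is removed and its end-points are merged. -/
def contractEdge (g : OddGraph) (e : OEdge) : OddGraph where
  ve := g.ve
  vi := g.vi - 1
  edges := (g.edges.erase e).map fun f =>
    ⟨mergeMap e.src e.tgt f.src, mergeMap e.src e.tgt f.tgt, f.lp⟩

/-- Contraction of the arc running (along the circle orientation) from the external vertex
`i` to the consecutive external vertex `j`.  A short chord joining `i` and `j` becomes an
external small loop whose half-edges are ordered consistently with the orientation of the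
circle (the bit `lp` then records the comparison of the inherited edge orientation with
this ordering). -/
def contractArc (g : OddGraph) (i j : ℕ) : OddGraph where
  ve := g.ve - 1
  vi := g.vi
  edges := g.edges.map fun f =>
    if f.src = i ∧ f.tgt = j then ⟨min i j, min i j, false⟩
    else if f.src = j ∧ f.tgt = i then ⟨min i j, min i j, true⟩
    else ⟨mergeMap i j f.src, mergeMap i j f.tgt, f.lp⟩

/-- The arcs of the circle, as ordered pairs of consecutive external vertices (oriented
along the circle). -/
def arcs (g : OddGraph) : List (ℕ × ℕ) :=
  if 2 ≤ g.ve then ((List.range (g.ve - 1)).map fun i => (i, i + 1)) ++ [(g.ve - 1, 0)]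
  else []

end OddGraph

/-- The contraction sign `σ(i,j)` (0-indexed version of the paper's
`σ(i,j) = (-1)^j` for `j > i` and `(-1)^{i+1}` for `j < i`, which is stated for 1-indexed
labels). -/
def csign (i j : ℕ) : ℝ := if i < j then (-1) ^ (j + 1) else (-1) ^ i

/-- The value of the coboundary operator `δ_o` on a single decorated graph: the signed sum
of the contractions of all regular edges and all arcs.  (On graphs that are `0` in `D_o`
by the relations, the operator is extended by `0`.) -/
noncomputable def deltaGen (g : OddGraph) : OddGraph →₀ ℝ :=
  if g.IsValid ∧ ¬g.hasDoubleEdge ∧ ¬g.hasInternalLoop then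
    ((g.edges.filter fun e => g.isRegular e).map fun e =>
        csign e.src e.tgt • Finsupp.single (g.contractEdge e) (1 : ℝ)).sum
      + (g.arcs.map fun p =>
          csign p.1 p.2 • Finsupp.single (g.contractArc p.1 p.2) (1 : ℝ)).sum
  else 0

/-- The coboundary operator `δ_o` on the free vector space generated by decorated graphs
of odd type. -/
noncomputable def deltaFree : (OddGraph →₀ ℝ) →ₗ[ℝ] (OddGraph →₀ ℝ) :=
  Finsupp.lsum ℝ fun g => LinearMap.toSpanSingleton ℝ (OddGraph →₀ ℝ) (deltaGen g)

/-- Relabelling of vertices by a permutation `π` of the internal labels and a cyclic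
rotation by `r` of the external labels. -/
def permVertex (ve vi : ℕ) (π : Equiv.Perm (Fin vi)) (r : ℕ) (v : ℕ) : ℕ :=
  if v < ve then (v + r) % ve
  else if h : v - ve < vi then ve + (π ⟨v - ve, h⟩ : Fin vi) else v

/-- The action of a vertex relabelling on a decorated edge. -/
def permOEdge (ve vi : ℕ) (π : Equiv.Perm (Fin vi)) (r : ℕ) (e : OEdge) : OEdge :=
  ⟨permVertex ve vi π r e.src, permVertex ve vi π r e.tgt, e.lp⟩

/-- Reversal of the orientation of an edge (for small loops: reversal of the half-edge
ordering relative to the orientation). -/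
def flipOEdge (e : OEdge) : OEdge :=
  if e.src = e.tgt then ⟨e.src, e.tgt, !e.lp⟩ else ⟨e.tgt, e.src, e.lp⟩

/-- `OddRel g g' ε` holds when `g'` is obtained from `g` by a permutation of the internal
labels, a cyclic permutation of the external labels, and reversals of edge orientations
and of half-edge orderings of external small loops; `ε = (-1)^{π₁+π₂+l+s}` is the
corresponding sign. -/
def OddRel (g g' : OddGraph) (ε : ℝ) : Prop :=
  g'.ve = g.ve ∧ g'.vi = g.vi ∧
  ∃ (π : Equiv.Perm (Fin g.vi)) (r : ℕ) (F : Multiset (OEdge × Bool)),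
    F.map Prod.fst = g.edges.map (permOEdge g.ve g.vi π r) ∧
    g'.edges = F.map (fun p => if p.2 then flipOEdge p.1 else p.1) ∧
    ε = ((Equiv.Perm.sign π : ℤ) : ℝ)
        * ((Equiv.Perm.sign (finRotate g.ve ^ r) : ℤ) : ℝ)
        * (-1) ^ Multiset.card (F.filter fun p => p.2 = true)

/-- The defining relations of `D_o`: non-graphs are `0`, graphs with a double edge are
`0`, graphs with an internal small loop are `0`, and graphs differing only in the
decoration are identified up to the sign `(-1)^{π₁+π₂+l+s}`. -/
def oddRelSet : Set (OddGraph →₀ ℝ) :=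
  {x | ∃ g : OddGraph, ¬g.IsValid ∧ x = Finsupp.single g 1} ∪
  {x | ∃ g : OddGraph, g.hasDoubleEdge ∧ x = Finsupp.single g 1} ∪
  {x | ∃ g : OddGraph, g.hasInternalLoop ∧ x = Finsupp.single g 1} ∪
  {x | ∃ g g' ε, OddRel g g' ε ∧ x = Finsupp.single g 1 - ε • Finsupp.single g' 1}

/-- The submodule of relations. -/
noncomputable def oddRelations : Submodule ℝ (OddGraph →₀ ℝ) := Submodule.span ℝ oddRelSet

/-- The odd graph complex `D_o`, the quotient of the free vector space on decorated graphs
of odd type by the relations. -/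
abbrev Do := (OddGraph →₀ ℝ) ⧸ oddRelations

/-- The subspace `D_o^{k,m}` of `D_o` spanned by the graphs of order `k` and degree `m`. -/
noncomputable def oddPiece (k m : ℤ) : Submodule ℝ Do :=
  Submodule.span ℝ {x | ∃ g : OddGraph,
    g.IsValid ∧ g.ordZ = k ∧ g.degZ = m ∧
    x = Submodule.Quotient.mk (p := oddRelations) (Finsupp.single g 1)}


structure EvenGraph where
  ve : ℕ
  vi : ℕ
  edges : List (ℕ × ℕ)
deriving DecidableEq

namespace EvenGraph

/-- Total number of vertices. -/
def nv (g : EvenGraph) : ℕ := g.ve + g.vi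

/-- The valence of a vertex: the number of edge-ends at it. -/
def valence (g : EvenGraph) (v : ℕ) : ℕ :=
  (g.edges.map fun e => (if e.1 = v then 1 else 0) + (if e.2 = v then 1 else 0)).sum

/-- Two vertices are adjacent if joined by an edge or if both lie on the circle. -/
def adj (g : EvenGraph) (a b : ℕ) : Prop :=
  (∃ e ∈ g.edges, (e.1 = a ∧ e.2 = b) ∨ (e.1 = b ∧ e.2 = a)) ∨
    (a < g.ve ∧ b < g.ve)

/-- Connectivity of the graph (including the distinguished circle). -/
def Connected (g : EvenGraph) : Prop :=
  ∀ a b, a < g.nv → b < g.nv → Relation.ReflTransGen g.adj a b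

/-- A valid decorated graph of even type: edges join actual vertices, internal vertices
are at least trivalent, external vertices carry at least one edge-end, and the graph is
connected. -/
def IsValid (g : EvenGraph) : Prop :=
  (∀ e ∈ g.edges, e.1 < g.nv ∧ e.2 < g.nv) ∧
  (∀ v, g.ve ≤ v → v < g.nv → 3 ≤ g.valence v) ∧
  (∀ v, v < g.ve → 1 ≤ g.valence v) ∧
  g.Connected

/-- Number of edges. -/
def numEdges (g : EvenGraph) : ℕ := g.edges.length

/-- The *order* of a graph: `e - v_i`. -/
def ordZ (g : EvenGraph) : ℤ := (g.numEdges : ℤ) - (g.vi : ℤ)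

/-- The *degree* of a graph: `2e - 3v_i - v_e`. -/
def degZ (g : EvenGraph) : ℤ := 2 * (g.numEdges : ℤ) - 3 * (g.vi : ℤ) - (g.ve : ℤ)

/-- A *regular edge*: neither a small loop nor a chord. -/
def isRegular (g : EvenGraph) (e : ℕ × ℕ) : Prop :=
  e.1 ≠ e.2 ∧ ¬(e.1 < g.ve ∧ e.2 < g.ve)

/-- Two vertices joined by more than one edge. -/
def hasDoubleEdge (g : EvenGraph) : Prop :=
  ∃ a b : Fin g.edges.length, a ≠ b ∧
    (g.edges.get b = g.edges.get a ∨ g.edges.get b = (g.edges.get a).swap)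

/-- An internal small loop. -/
def hasInternalLoop (g : EvenGraph) : Prop :=
  ∃ e ∈ g.edges, e.1 = e.2 ∧ g.ve ≤ e.1

end EvenGraph

namespace EvenGraph

/-- Contraction of the regular edge labelled `a`: the edge is removed (all higher edge
labels are lowered by one) and its end-points are merged. -/
def contractEdgeAt (g : EvenGraph) (a : Fin g.edges.length) : EvenGraph :=
  let p := g.edges.get a
  { ve := g.ve
    vi := g.vi - 1
    edges := (g.edges.eraseIdx a).map fun q =>
      (mergeMap p.1 p.2 q.1, mergeMap p.1 p.2 q.2) }

/-- Contraction of the arc running (along the circle orientation) from the external vertex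
`i` to the consecutive external vertex `j`.  A short chord joining `i` and `j` becomes an
external small loop at the merged vertex. -/
def contractArc (g : EvenGraph) (i j : ℕ) : EvenGraph where
  ve := g.ve - 1
  vi := g.vi
  edges := g.edges.map fun q =>
    if (q.1 = i ∧ q.2 = j) ∨ (q.1 = j ∧ q.2 = i) then (min i j, min i j)
    else (mergeMap i j q.1, mergeMap i j q.2)

/-- The arcs of the circle, as ordered pairs of consecutive external vertices (oriented
along the circle). -/
def arcs (g : EvenGraph) : List (ℕ × ℕ) :=
  if 2 ≤ g.ve then ((List.range (g.ve - 1)).map fun i => (i, i + 1)) ++ [(g.ve - 1, 0)]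
  else []

end EvenGraph

/-- The value of the coboundary operator `δ_e` on a single decorated graph: the signed sum
of the contractions of all regular edges and all arcs; the sign for the edge labelled `α`
(0-indexed here; the paper's 1-indexed sign is `(-1)^{α+1+v_e}`) is `(-1)^{α+v_e}`.
(On graphs that are `0` in `D_e` by the relations, the operator is extended by `0`.) -/
noncomputable def deltaGenE (g : EvenGraph) : EvenGraph →₀ ℝ :=
  if g.IsValid ∧ ¬g.hasDoubleEdge ∧ ¬g.hasInternalLoop then
    ((List.finRange g.edges.length).map fun a =>
        if g.isRegular (g.edges.get a) then
          ((-1 : ℝ) ^ ((a : ℕ) + g.ve)) • Finsupp.single (g.contractEdgeAt a) (1 : ℝ)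
        else 0).sum
      + (g.arcs.map fun p =>
          csign p.1 p.2 • Finsupp.single (g.contractArc p.1 p.2) (1 : ℝ)).sum
  else 0

/-- The coboundary operator `δ_e` on the free vector space generated by decorated graphs
of even type. -/
noncomputable def deltaFreeE : (EvenGraph →₀ ℝ) →ₗ[ℝ] (EvenGraph →₀ ℝ) :=
  Finsupp.lsum ℝ fun g => LinearMap.toSpanSingleton ℝ (EvenGraph →₀ ℝ) (deltaGenE g)

/-- Relabelling of vertices by a permutation `π` of the internal labels and a cyclic
rotation by `r` of the external labels. -/
def permVertexE (ve vi : ℕ) (π : Equiv.Perm (Fin vi)) (r : ℕ) (v : ℕ) : ℕ :=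
  if v < ve then (v + r) % ve
  else if h : v - ve < vi then ve + (π ⟨v - ve, h⟩ : Fin vi) else v

/-- `EvenRel g g' ε` holds when `g'` is obtained from `g` by a cyclic permutation of the
external labels, an arbitrary relabelling of the (undecorated) internal vertices, a
permutation `τ` of the edge labels, and swaps of the (unoriented) end-point pairs;
`ε = (-1)^{π+l}` is the corresponding sign, where `π` is the order of the cyclic
permutation of the external labels and `l` the order of `τ`. -/
def EvenRel (g g' : EvenGraph) (ε : ℝ) : Prop :=
  g'.ve = g.ve ∧ g'.vi = g.vi ∧
  ∃ (π : Equiv.Perm (Fin g.vi)) (r : ℕ)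
    (h : g'.edges.length = g.edges.length)
    (τ : Equiv.Perm (Fin g.edges.length)) (sw : Fin g.edges.length → Bool),
    (∀ a : Fin g.edges.length,
        g'.edges.get (Fin.cast h.symm (τ a)) =
          (let p := g.edges.get a
           let q := (permVertexE g.ve g.vi π r p.1, permVertexE g.ve g.vi π r p.2)
           if sw a then (q.2, q.1) else q)) ∧
    ε = ((Equiv.Perm.sign (finRotate g.ve ^ r) : ℤ) : ℝ) * ((Equiv.Perm.sign τ : ℤ) : ℝ)

/-- The defining relations of `D_e`: non-graphs are `0`, graphs with a double edge are
`0`, graphs with an internal small loop are `0`, and graphs differing only in the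
decoration are identified up to the sign `(-1)^{π+l}`. -/
def evenRelSet : Set (EvenGraph →₀ ℝ) :=
  {x | ∃ g : EvenGraph, ¬g.IsValid ∧ x = Finsupp.single g 1} ∪
  {x | ∃ g : EvenGraph, g.hasDoubleEdge ∧ x = Finsupp.single g 1} ∪
  {x | ∃ g : EvenGraph, g.hasInternalLoop ∧ x = Finsupp.single g 1} ∪
  {x | ∃ g g' ε, EvenRel g g' ε ∧ x = Finsupp.single g 1 - ε • Finsupp.single g' 1}

/-- The submodule of relations. -/
noncomputable def evenRelations : Submodule ℝ (EvenGraph →₀ ℝ) := Submodule.span ℝ evenRelSet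

/-- The even graph complex `D_e`, the quotient of the free vector space on decorated
graphs of even type by the relations. -/
abbrev De := (EvenGraph →₀ ℝ) ⧸ evenRelations

/-- The subspace `D_e^{k,m}` of `D_e` spanned by the graphs of order `k` and degree `m`. -/
noncomputable def evenPiece (k m : ℤ) : Submodule ℝ De :=
  Submodule.span ℝ {x | ∃ g : EvenGraph,
    g.IsValid ∧ g.ordZ = k ∧ g.degZ = m ∧
    x = Submodule.Quotient.mk (p := evenRelations) (Finsupp.single g 1)}


/-! ### Auxiliary material for the proof -/

section Aux

/-- The chord diagram with one chord, oriented `0 → 1`. -/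
def oG : OddGraph := ⟨2, 0, {⟨0, 1, false⟩}⟩
/-- The chord diagram with one chord, oriented `1 → 0`. -/
def oG' : OddGraph := ⟨2, 0, {⟨1, 0, false⟩}⟩
/-- The graph with one external vertex and an external small loop, bit `false`. -/
def oH0 : OddGraph := ⟨1, 0, {⟨0, 0, false⟩}⟩
/-- The graph with one external vertex and an external small loop, bit `true`. -/
def oH1 : OddGraph := ⟨1, 0, {⟨0, 0, true⟩}⟩

lemma OddGraph.ext' {g : OddGraph} {v w : ℕ} {E : Multiset OEdge}
    (h1 : g.ve = v) (h2 : g.vi = w) (h3 : g.edges = E) : g = ⟨v, w, E⟩ := by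
  cases g; subst h1 h2 h3; rfl

lemma oH_valid (l : Bool) : OddGraph.IsValid ⟨1, 0, {⟨0, 0, l⟩}⟩ := by
  refine ⟨?_, ?_, ?_, ?_, ?_⟩
  · intro e he
    simp only [Multiset.mem_singleton] at he
    subst he
    exact ⟨by simp [OddGraph.nv], by simp [OddGraph.nv]⟩
  · intro e he h
    simp only [Multiset.mem_singleton] at he
    subst he
    simp at h
  · intro v h1 h2
    have h1' : 1 ≤ v := h1
    have h2' : v < 1 := h2
    omega
  · intro v hv
    have hv' : v < 1 := hv
    have hv0 : v = 0 := by omega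
    subst hv0
    simp [OddGraph.valence]
  · intro a b ha hb
    have ha' : a < 1 := ha
    have hb' : b < 1 := hb
    have : a = 0 := by omega
    have : b = 0 := by omega
    subst_vars
    exact Relation.ReflTransGen.refl

lemma not_dbl (ve vi : ℕ) (e : OEdge) : ¬ OddGraph.hasDoubleEdge ⟨ve, vi, {e}⟩ := by
  rintro ⟨a, ha, f, hf, -⟩
  simp only [Multiset.mem_singleton] at ha
  subst ha
  simp [Multiset.erase_singleton] at hf

lemma not_loop_oH (l : Bool) : ¬ OddGraph.hasInternalLoop ⟨1, 0, {⟨0, 0, l⟩}⟩ := by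
  rintro ⟨e, he, h1, h2⟩
  simp only [Multiset.mem_singleton] at he
  subst he
  simp at h2

lemma permVertex_one (π : Equiv.Perm (Fin 0)) (r v : ℕ) : permVertex 1 0 π r v = v := by
  simp only [permVertex, Nat.mod_one]
  split
  · omega
  · rw [dif_neg (by omega)]

lemma permOEdge_one (π : Equiv.Perm (Fin 0)) (r : ℕ) (e : OEdge) :
    permOEdge 1 0 π r e = e := by
  cases e; simp [permOEdge, permVertex_one]

end Aux

section Shape

lemma oddRel_shape {g g' : OddGraph} {ε : ℝ} (h : OddRel g g' ε) (l : Bool)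
    (hg : g = ⟨1, 0, {⟨0, 0, l⟩}⟩) :
    ∃ b : Bool, g' = ⟨1, 0, {⟨0, 0, if b then !l else l⟩}⟩ ∧ ε = if b then -1 else 1 := by
  subst hg
  obtain ⟨hve, hvi, π, r, F, hF1, hF2, hε⟩ := h
  rw [show (OddGraph.mk 1 0 {⟨0, 0, l⟩}).edges = {⟨0, 0, l⟩} from rfl,
    Multiset.map_singleton, permOEdge_one] at hF1
  have hc : Multiset.card F = 1 := by
    have := congrArg Multiset.card hF1
    simpa using this
  obtain ⟨p, rfl⟩ := Multiset.card_eq_one.mp hc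
  rw [Multiset.map_singleton] at hF1
  have hp1 : p.1 = ⟨0, 0, l⟩ := by simpa using hF1
  have hπ : π = 1 := Equiv.ext fun x => x.elim0
  refine ⟨p.2, ?_, ?_⟩
  · refine OddGraph.ext' hve hvi ?_
    rw [hF2, Multiset.map_singleton, hp1]
    cases hb : p.2 <;> simp [flipOEdge]
  · rw [hε, hπ]
    cases hb : p.2 <;>
      simp [finRotate_one, Multiset.filter_singleton, hb, Equiv.Perm.sign_one]

lemma oddRel_shape' {g g' : OddGraph} {ε : ℝ} (h : OddRel g g' ε) (l : Bool)
    (hg' : g' = ⟨1, 0, {⟨0, 0, l⟩}⟩) :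
    ∃ m : Bool, g = ⟨1, 0, {⟨0, 0, m⟩}⟩ := by
  obtain ⟨gv, gi, E⟩ := g
  obtain ⟨hve, hvi, π, r, F, hF1, hF2, hε⟩ := h
  subst hg'
  have hgv : gv = 1 := hve.symm
  have hgi : gi = 0 := hvi.symm
  subst hgv hgi
  rw [show (OddGraph.mk 1 0 {⟨0, 0, l⟩}).edges = {⟨0, 0, l⟩} from rfl] at hF2
  have hc : Multiset.card F = 1 := by
    have := (congrArg Multiset.card hF2).symm
    simpa using this
  obtain ⟨p, rfl⟩ := Multiset.card_eq_one.mp hc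
  rw [Multiset.map_singleton] at hF2
  have hp : (if p.2 then flipOEdge p.1 else p.1) = ⟨0, 0, l⟩ := by
    have := hF2
    simp only [Multiset.singleton_inj] at this
    exact this.symm
  have hp1 : p.1.src = 0 ∧ p.1.tgt = 0 := by
    rcases hb : p.2 with _ | _ <;> rw [hb] at hp
    · simp only [if_neg Bool.false_ne_true] at hp
      rw [hp]
      exact ⟨rfl, rfl⟩
    · simp only [if_pos rfl] at hp
      unfold flipOEdge at hp
      by_cases hst : p.1.src = p.1.tgt
      · rw [if_pos hst] at hp
        injection hp with h1 h2 h3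
        exact ⟨h1, h2⟩
      · rw [if_neg hst] at hp
        injection hp with h1 h2 h3
        exact ⟨h2, h1⟩
  rw [Multiset.map_singleton] at hF1
  have hcE : Multiset.card E = 1 := by
    have := (congrArg Multiset.card hF1).symm
    simpa using this
  obtain ⟨f, rfl⟩ := Multiset.card_eq_one.mp hcE
  rw [show (OddGraph.mk 1 0 {f}).edges = {f} from rfl, Multiset.map_singleton,
    permOEdge_one, Multiset.singleton_inj] at hF1
  refine ⟨f.lp, ?_⟩
  have : f = ⟨0, 0, f.lp⟩ := by
    cases f
    simp only [OEdge.mk.injEq]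
    rw [hF1] at hp1
    exact ⟨hp1.1, hp1.2, trivial⟩
  rw [this]

end Shape

section Phi

/-- The coefficient function of the detecting functional: `1` on `oH0`, `-1` on `oH1`. -/
noncomputable def c0 : OddGraph → ℝ := fun g => if g = oH0 then 1 else if g = oH1 then -1 else 0

lemma oddrel_c0 {g g' : OddGraph} {ε : ℝ} (h : OddRel g g' ε) : c0 g = ε * c0 g' := by
  by_cases h0 : g = oH0 ∨ g = oH1
  · rcases h0 with rfl | rfl
    · obtain ⟨b, hg', hε⟩ := oddRel_shape h false rfl
      subst hg' hε
      cases b <;> norm_num [c0, oH0, oH1]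
    · obtain ⟨b, hg', hε⟩ := oddRel_shape h true rfl
      subst hg' hε
      cases b <;> norm_num [c0, oH0, oH1]
  · have h1 : ¬(g' = oH0 ∨ g' = oH1) := by
      rintro (rfl | rfl)
      · obtain ⟨m, hm⟩ := oddRel_shape' h false rfl
        cases m
        · exact h0 (Or.inl hm)
        · exact h0 (Or.inr hm)
      · obtain ⟨m, hm⟩ := oddRel_shape' h true rfl
        cases m
        · exact h0 (Or.inl hm)
        · exact h0 (Or.inr hm)
    push_neg at h0 h1
    rw [c0, c0, if_neg h0.1, if_neg h0.2, if_neg h1.1, if_neg h1.2, mul_zero]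

/-- The detecting functional on the free vector space. -/
noncomputable def phi : (OddGraph →₀ ℝ) →ₗ[ℝ] ℝ := Finsupp.linearCombination ℝ c0

lemma phi_single (g : OddGraph) : phi (Finsupp.single g 1) = c0 g := by
  simp [phi, Finsupp.linearCombination_single]

lemma phi_ker : oddRelations ≤ LinearMap.ker phi := by
  rw [oddRelations, Submodule.span_le]
  rintro x hx
  simp only [oddRelSet, Set.mem_union, Set.mem_setOf_eq] at hx
  rcases hx with (((⟨g, hg, rfl⟩ | ⟨g, hg, rfl⟩) | ⟨g, hg, rfl⟩) | ⟨g, g', ε, hrel, rfl⟩)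
  · have : c0 g = 0 := by
      rw [c0, if_neg, if_neg]
      · intro h; subst h; exact hg (oH_valid true)
      · intro h; subst h; exact hg (oH_valid false)
    simp [LinearMap.mem_ker, phi_single, this]
  · have : c0 g = 0 := by
      rw [c0, if_neg, if_neg]
      · intro h; subst h; exact not_dbl _ _ _ hg
      · intro h; subst h; exact not_dbl _ _ _ hg
    simp [LinearMap.mem_ker, phi_single, this]
  · have : c0 g = 0 := by
      rw [c0, if_neg, if_neg]
      · intro h; subst h; exact not_loop_oH true hg
      · intro h; subst h; exact not_loop_oH false hg
    simp [LinearMap.mem_ker, phi_single, this]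
  · have := oddrel_c0 hrel
    simp only [SetLike.mem_coe, LinearMap.mem_ker, map_sub, map_smul, phi_single, smul_eq_mul]
    rw [this, sub_self]

end Phi

section OddDelta

lemma oG_valid : oG.IsValid := by
  refine ⟨?_, ?_, ?_, ?_, ?_⟩
  · intro e he
    rw [show oG.edges = {⟨0, 1, false⟩} from rfl, Multiset.mem_singleton] at he
    subst he
    exact ⟨by decide, by decide⟩
  · intro e he h
    rw [show oG.edges = {⟨0, 1, false⟩} from rfl, Multiset.mem_singleton] at he
    subst he
    rfl
  · intro v h1 h2
    have h1' : 2 ≤ v := h1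
    have h2' : v < 2 := h2
    omega
  · intro v hv
    have hv' : v < 2 := hv
    interval_cases v <;> decide
  · intro a b ha hb
    exact Relation.ReflTransGen.single (Or.inr ⟨ha, hb⟩)

lemma oG_not_loop : ¬ oG.hasInternalLoop := by
  rintro ⟨e, he, h1, h2⟩
  rw [show oG.edges = {⟨0, 1, false⟩} from rfl, Multiset.mem_singleton] at he
  subst he
  exact absurd h1 (by decide)

lemma oG_not_dbl : ¬ oG.hasDoubleEdge := not_dbl _ _ _

lemma contract_oG_01 : oG.contractArc 0 1 = oH0 := rfl
lemma contract_oG_10 : oG.contractArc 1 0 = oH1 := rfl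
lemma arcs_oG : oG.arcs = [(0, 1), (1, 0)] := rfl

lemma delta_oG : deltaGen oG = Finsupp.single oH0 1 - Finsupp.single oH1 1 := by
  rw [deltaGen, if_pos ⟨oG_valid, oG_not_dbl, oG_not_loop⟩]
  have hfil : (oG.edges.filter fun e => oG.isRegular e) = 0 := by
    rw [show oG.edges = {⟨0, 1, false⟩} from rfl, Multiset.filter_singleton, if_neg]
    · rfl
    · rintro ⟨-, h⟩
      exact h ⟨by decide, by decide⟩
  rw [hfil, Multiset.map_zero, Multiset.sum_zero, zero_add, arcs_oG]
  simp only [List.map_cons, List.map_nil, List.sum_cons, List.sum_nil, add_zero]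
  rw [contract_oG_01, contract_oG_10]
  have hc1 : csign 0 1 = 1 := by norm_num [csign]
  have hc2 : csign 1 0 = -1 := by norm_num [csign]
  rw [hc1, hc2, one_smul, neg_smul, one_smul]
  abel

lemma rel_oG : OddRel oG oG' (-1) := by
  refine ⟨rfl, rfl, 1, 0, {(⟨0, 1, false⟩, true)}, ?_, ?_, ?_⟩
  · rfl
  · rfl
  · norm_num [pow_zero, Multiset.filter_singleton]

lemma mk_zero_odd_invalid {g : OddGraph} (h : ¬g.IsValid) :
    (Submodule.Quotient.mk (p := oddRelations) (Finsupp.single g 1)) = 0 := by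
  rw [Submodule.Quotient.mk_eq_zero]
  apply Submodule.subset_span
  simp only [oddRelSet, Set.mem_union, Set.mem_setOf_eq]
  exact Or.inl (Or.inl (Or.inl ⟨g, h, rfl⟩))

lemma mk_zero_odd_dbl {g : OddGraph} (h : g.hasDoubleEdge) :
    (Submodule.Quotient.mk (p := oddRelations) (Finsupp.single g 1)) = 0 := by
  rw [Submodule.Quotient.mk_eq_zero]
  apply Submodule.subset_span
  simp only [oddRelSet, Set.mem_union, Set.mem_setOf_eq]
  exact Or.inl (Or.inl (Or.inr ⟨g, h, rfl⟩))

lemma mk_zero_odd_loop {g : OddGraph} (h : g.hasInternalLoop) :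
    (Submodule.Quotient.mk (p := oddRelations) (Finsupp.single g 1)) = 0 := by
  rw [Submodule.Quotient.mk_eq_zero]
  apply Submodule.subset_span
  simp only [oddRelSet, Set.mem_union, Set.mem_setOf_eq]
  exact Or.inl (Or.inr ⟨g, h, rfl⟩)

lemma mk_rel_odd {g g' : OddGraph} {ε : ℝ} (h : OddRel g g' ε) :
    (Submodule.Quotient.mk (p := oddRelations) (Finsupp.single g 1))
      = ε • Submodule.Quotient.mk (p := oddRelations) (Finsupp.single g' 1) := by
  have hm : (Finsupp.single g 1 - ε • Finsupp.single g' 1) ∈ oddRelations := by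
    apply Submodule.subset_span
    simp only [oddRelSet, Set.mem_union, Set.mem_setOf_eq]
    exact Or.inr ⟨g, g', ε, h, rfl⟩
  have h0 := (Submodule.Quotient.mk_eq_zero oddRelations).mpr hm
  rw [Submodule.Quotient.mk_sub, Submodule.Quotient.mk_smul, sub_eq_zero] at h0
  exact h0

end OddDelta

section OddClassify

lemma odd_classify (g : OddGraph) (hv : g.IsValid) (h1 : g.ordZ = 1) (h2 : g.degZ = 0) :
    g = oG ∨ g = oG' ∨ g.hasInternalLoop ∨ g.hasDoubleEdge := by
  obtain ⟨ve, vi, E⟩ := g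
  obtain ⟨hbd, hlp, hint, hext, -⟩ := hv
  have h1' : (Multiset.card E : ℤ) - (vi : ℤ) = 1 := h1
  have h2' : 2 * (Multiset.card E : ℤ) - 3 * (vi : ℤ) - (ve : ℤ) = 0 := h2
  have hvile : vi ≤ 2 := by omega
  interval_cases vi
  · -- vi = 0 : the chord diagram
    have hve : ve = 2 := by omega
    subst hve
    have hc1 : Multiset.card E = 1 := by omega
    obtain ⟨a, rfl⟩ := Multiset.card_eq_one.mp hc1
    obtain ⟨s, t, l⟩ := a
    have hv0 : 1 ≤ OddGraph.valence ⟨2, 0, {⟨s, t, l⟩}⟩ 0 := hext 0 (show (0:ℕ) < 2 by norm_num)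
    have hv1 : 1 ≤ OddGraph.valence ⟨2, 0, {⟨s, t, l⟩}⟩ 1 := hext 1 (show (1:ℕ) < 2 by norm_num)
    simp only [OddGraph.valence, Multiset.map_singleton, Multiset.sum_singleton] at hv0 hv1
    have hor0 : s = 0 ∨ t = 0 := by
      by_contra hcon
      push_neg at hcon
      rw [if_neg hcon.1, if_neg hcon.2] at hv0
      omega
    have hor1 : s = 1 ∨ t = 1 := by
      by_contra hcon
      push_neg at hcon
      rw [if_neg hcon.1, if_neg hcon.2] at hv1
      omega
    rcases hor0 with rfl | rfl
    · rcases hor1 with h01 | rfl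
      · omega
      · have hl : l = false := hlp ⟨0, 1, l⟩ (Multiset.mem_singleton_self _) (show (0:ℕ) ≠ 1 by norm_num)
        subst hl
        exact Or.inl rfl
    · rcases hor1 with rfl | h01
      · have hl : l = false := hlp ⟨1, 0, l⟩ (Multiset.mem_singleton_self _) (show (1:ℕ) ≠ 0 by norm_num)
        subst hl
        exact Or.inr (Or.inl rfl)
      · omega
  · -- vi = 1 : forced internal small loop
    have hve : ve = 1 := by omega
    subst hve
    have hc2 : Multiset.card E = 2 := by omega
    obtain ⟨a, b, rfl⟩ := Multiset.card_eq_two.mp hc2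
    have h3 : 3 ≤ OddGraph.valence ⟨1, 1, {a, b}⟩ 1 := hint 1 (show (1:ℕ) ≤ 1 from le_refl 1) (show (1:ℕ) < 2 by norm_num)
    simp only [OddGraph.valence, Multiset.insert_eq_cons, Multiset.map_cons,
      Multiset.sum_cons, Multiset.map_singleton, Multiset.sum_singleton] at h3
    have hloop : (a.src = 1 ∧ a.tgt = 1) ∨ (b.src = 1 ∧ b.tgt = 1) := by
      by_contra hcon
      push_neg at hcon
      split_ifs at h3 <;> omega
    rcases hloop with h | h
    · exact Or.inr (Or.inr (Or.inl ⟨a, by simp, h.1.trans h.2.symm,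
        show (1 : ℕ) ≤ a.src by omega⟩))
    · exact Or.inr (Or.inr (Or.inl ⟨b, by simp, h.1.trans h.2.symm,
        show (1 : ℕ) ≤ b.src by omega⟩))
  · -- vi = 2 : loop or double edge
    have hve : ve = 0 := by omega
    subst hve
    have hc3 : Multiset.card E = 3 := by omega
    obtain ⟨a, b, c, rfl⟩ := Multiset.card_eq_three.mp hc3
    by_cases hA : a.src = a.tgt
    · exact Or.inr (Or.inr (Or.inl ⟨a, by simp, hA, Nat.zero_le _⟩))
    by_cases hB : b.src = b.tgt
    · exact Or.inr (Or.inr (Or.inl ⟨b, by simp, hB, Nat.zero_le _⟩))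
    · refine Or.inr (Or.inr (Or.inr ⟨a, by simp, b, ?_, ?_⟩))
      · simp [Multiset.insert_eq_cons, Multiset.erase_cons_head]
      · have ha := hbd a (by simp)
        have hbb := hbd b (by simp)
        have ha1 : a.src < 2 := ha.1
        have ha2 : a.tgt < 2 := ha.2
        have hb1 : b.src < 2 := hbb.1
        have hb2 : b.tgt < 2 := hbb.2
        omega

end OddClassify

section Even

lemma even_rel_self (p : ℕ × ℕ) (hp : p = (0, 1) ∨ p = (1, 0)) :
    EvenRel ⟨2, 0, [p]⟩ ⟨2, 0, [p]⟩ (-1) := by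
  refine ⟨rfl, rfl, 1, 1, rfl, 1, fun _ => true, ?_, ?_⟩
  · intro a
    have h2 : (a : ℕ) < 1 := a.isLt
    have h0 : a = ⟨0, Nat.one_pos⟩ := Fin.ext (show (a : ℕ) = 0 by omega)
    subst h0
    rcases hp with rfl | rfl <;> rfl
  · norm_num [pow_one, sign_finRotate]

lemma mk_zero_even_invalid {g : EvenGraph} (h : ¬g.IsValid) :
    (Submodule.Quotient.mk (p := evenRelations) (Finsupp.single g 1)) = 0 := by
  rw [Submodule.Quotient.mk_eq_zero]
  apply Submodule.subset_span
  simp only [evenRelSet, Set.mem_union, Set.mem_setOf_eq]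
  exact Or.inl (Or.inl (Or.inl ⟨g, h, rfl⟩))

lemma mk_zero_even_dbl {g : EvenGraph} (h : g.hasDoubleEdge) :
    (Submodule.Quotient.mk (p := evenRelations) (Finsupp.single g 1)) = 0 := by
  rw [Submodule.Quotient.mk_eq_zero]
  apply Submodule.subset_span
  simp only [evenRelSet, Set.mem_union, Set.mem_setOf_eq]
  exact Or.inl (Or.inl (Or.inr ⟨g, h, rfl⟩))

lemma mk_zero_even_loop {g : EvenGraph} (h : g.hasInternalLoop) :
    (Submodule.Quotient.mk (p := evenRelations) (Finsupp.single g 1)) = 0 := by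
  rw [Submodule.Quotient.mk_eq_zero]
  apply Submodule.subset_span
  simp only [evenRelSet, Set.mem_union, Set.mem_setOf_eq]
  exact Or.inl (Or.inr ⟨g, h, rfl⟩)

lemma mk_zero_even_rel {g : EvenGraph} (h : EvenRel g g (-1)) :
    (Submodule.Quotient.mk (p := evenRelations) (Finsupp.single g 1)) = 0 := by
  have hm : (Finsupp.single g 1 - (-1 : ℝ) • Finsupp.single g 1) ∈ evenRelations := by
    apply Submodule.subset_span
    simp only [evenRelSet, Set.mem_union, Set.mem_setOf_eq]
    exact Or.inr ⟨g, g, -1, h, rfl⟩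
  have h2 : ((2 : ℝ) • Finsupp.single g 1) ∈ evenRelations := by
    have he : Finsupp.single g (1 : ℝ) - (-1 : ℝ) • Finsupp.single g 1
        = (2 : ℝ) • Finsupp.single g 1 := by
      rw [neg_smul, one_smul, sub_neg_eq_add, two_smul]
    rwa [he] at hm
  have h3 : Finsupp.single g (1 : ℝ) ∈ evenRelations := by
    have := Submodule.smul_mem evenRelations (2⁻¹ : ℝ) h2
    rwa [smul_smul, inv_mul_cancel₀ (two_ne_zero), one_smul] at this
  exact (Submodule.Quotient.mk_eq_zero _).mpr h3

lemma even_classify (g : EvenGraph) (hv : g.IsValid) (h1 : g.ordZ = 1) (h2 : g.degZ = 0) :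
    g = ⟨2, 0, [(0, 1)]⟩ ∨ g = ⟨2, 0, [(1, 0)]⟩ ∨ g.hasInternalLoop ∨ g.hasDoubleEdge := by
  obtain ⟨ve, vi, E⟩ := g
  obtain ⟨hbd, hint, hext, -⟩ := hv
  have h1' : (E.length : ℤ) - (vi : ℤ) = 1 := h1
  have h2' : 2 * (E.length : ℤ) - 3 * (vi : ℤ) - (ve : ℤ) = 0 := h2
  have hvile : vi ≤ 2 := by omega
  interval_cases vi
  · have hve : ve = 2 := by omega
    subst hve
    have hc1 : E.length = 1 := by omega
    obtain ⟨a, rfl⟩ := List.length_eq_one_iff.mp hc1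
    obtain ⟨s, t⟩ := a
    have hv0 : 1 ≤ EvenGraph.valence ⟨2, 0, [(s, t)]⟩ 0 := hext 0 (show (0:ℕ) < 2 by norm_num)
    have hv1 : 1 ≤ EvenGraph.valence ⟨2, 0, [(s, t)]⟩ 1 := hext 1 (show (1:ℕ) < 2 by norm_num)
    simp only [EvenGraph.valence, List.map_cons, List.map_nil, List.sum_cons,
      List.sum_nil, add_zero] at hv0 hv1
    have hor0 : s = 0 ∨ t = 0 := by
      by_contra hcon
      push_neg at hcon
      rw [if_neg hcon.1, if_neg hcon.2] at hv0
      omega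
    have hor1 : s = 1 ∨ t = 1 := by
      by_contra hcon
      push_neg at hcon
      rw [if_neg hcon.1, if_neg hcon.2] at hv1
      omega
    rcases hor0 with rfl | rfl
    · rcases hor1 with h01 | rfl
      · omega
      · exact Or.inl rfl
    · rcases hor1 with rfl | h01
      · exact Or.inr (Or.inl rfl)
      · omega
  · have hve : ve = 1 := by omega
    subst hve
    have hc2 : E.length = 2 := by omega
    obtain ⟨a, b, rfl⟩ := List.length_eq_two.mp hc2
    have h3 : 3 ≤ EvenGraph.valence ⟨1, 1, [a, b]⟩ 1 := hint 1 (show (1:ℕ) ≤ 1 from le_refl 1) (show (1:ℕ) < 2 by norm_num)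
    simp only [EvenGraph.valence, List.map_cons, List.map_nil, List.sum_cons,
      List.sum_nil, add_zero] at h3
    have hloop : (a.1 = 1 ∧ a.2 = 1) ∨ (b.1 = 1 ∧ b.2 = 1) := by
      by_contra hcon
      push_neg at hcon
      split_ifs at h3 <;> omega
    rcases hloop with h | h
    · exact Or.inr (Or.inr (Or.inl ⟨a, by simp, h.1.trans h.2.symm,
        show (1 : ℕ) ≤ a.1 by omega⟩))
    · exact Or.inr (Or.inr (Or.inl ⟨b, by simp, h.1.trans h.2.symm,
        show (1 : ℕ) ≤ b.1 by omega⟩))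
  · have hve : ve = 0 := by omega
    subst hve
    have hc3 : E.length = 3 := by omega
    obtain ⟨a, b, c, rfl⟩ := List.length_eq_three.mp hc3
    by_cases hA : a.1 = a.2
    · exact Or.inr (Or.inr (Or.inl ⟨a, by simp, hA, Nat.zero_le _⟩))
    by_cases hB : b.1 = b.2
    · exact Or.inr (Or.inr (Or.inl ⟨b, by simp, hB, Nat.zero_le _⟩))
    · refine Or.inr (Or.inr (Or.inr ⟨⟨0, show (0:ℕ) < 3 by norm_num⟩, ⟨1, show (1:ℕ) < 3 by norm_num⟩, Fin.ne_of_val_ne (show (0:ℕ) ≠ 1 by norm_num), ?_⟩))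
      have ha := hbd a (by simp)
      have hbb := hbd b (by simp)
      have ha1 : a.1 < 2 := ha.1
      have ha2 : a.2 < 2 := ha.2
      have hb1 : b.1 < 2 := hbb.1
      have hb2 : b.2 < 2 := hbb.2
      show b = a ∨ b = a.swap
      have hor : (b.1 = a.1 ∧ b.2 = a.2) ∨ (b.1 = a.2 ∧ b.2 = a.1) := by omega
      rcases hor with ⟨u, v⟩ | ⟨u, v⟩
      · exact Or.inl (Prod.ext_iff.mpr ⟨u, v⟩)
      · exact Or.inr (Prod.ext_iff.mpr ⟨u, v⟩)

end Even


/-- In the odd graph complex, every `δ_o`-closed element of `D_o^{1,0}`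
is zero (for any linear operator `δ` on `D_o` induced by the contraction operator, a
`δ`-closed element of the order-1, degree-0 subspace vanishes); in the even graph complex,
`D_e^{1,0} = 0`.  Consequently `H^{1,0}(D_o) = 0` and `H^{1,0}(D_e) = 0`: in the odd case
every cocycle of `D_o^{1,0}` is a coboundary (being zero), and in the even case the whole
graded piece vanishes. -/
theorem order_one_degree_zero_cohomology_vanishes :
    (∀ δ : Do →ₗ[ℝ] Do,
      (∀ g : OddGraph,
        δ (Submodule.Quotient.mk (p := oddRelations) (Finsupp.single g 1)) =
          Submodule.Quotient.mk (p := oddRelations) (deltaGen g)) →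
      ∀ x ∈ oddPiece 1 0, δ x = 0 → x = 0) ∧
    evenPiece 1 0 = ⊥ := by
  constructor
  · -- the odd case
    intro δ hδ x hx hc
    have hspan : oddPiece 1 0 ≤ Submodule.span ℝ
        {Submodule.Quotient.mk (p := oddRelations) (Finsupp.single oG 1)} := by
      rw [oddPiece, Submodule.span_le]
      rintro y ⟨g, hgv, ho, hd, rfl⟩
      rcases odd_classify g hgv ho hd with rfl | rfl | h | h
      · exact Submodule.subset_span rfl
      · apply SetLike.mem_coe.mpr
        rw [Submodule.mem_span_singleton]
        refine ⟨-1, ?_⟩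
        rw [mk_rel_odd rel_oG, smul_smul]
        norm_num
      · rw [mk_zero_odd_loop h]
        exact zero_mem _
      · rw [mk_zero_odd_dbl h]
        exact zero_mem _
    obtain ⟨cst, hcx⟩ := Submodule.mem_span_singleton.mp (hspan hx)
    have hδx : δ x = cst • Submodule.Quotient.mk (p := oddRelations) (deltaGen oG) := by
      rw [← hcx, map_smul, hδ]
    rw [hc] at hδx
    have hφ := congrArg (oddRelations.liftQ phi phi_ker) hδx
    rw [map_zero, map_smul, Submodule.liftQ_apply, delta_oG, map_sub,
      phi_single, phi_single] at hφ
    have hc01 : c0 oH0 = 1 := by rw [c0, if_pos rfl]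
    have hne : oH1 ≠ oH0 := by simp [oH0, oH1]
    have hc02 : c0 oH1 = -1 := by rw [c0, if_neg hne, if_pos rfl]
    rw [hc01, hc02] at hφ
    have hcst : cst = 0 := by
      simp only [smul_eq_mul] at hφ
      linarith
    rw [← hcx, hcst, zero_smul]
  · -- the even case
    rw [evenPiece, Submodule.span_eq_bot]
    rintro y ⟨g, hgv, ho, hd, rfl⟩
    rcases even_classify g hgv ho hd with rfl | rfl | h | h
    · exact mk_zero_even_rel (even_rel_self _ (Or.inl rfl))
    · exact mk_zero_even_rel (even_rel_self _ (Or.inr rfl))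
    · exact mk_zero_even_loop h
    · exact mk_zero_even_dbl h
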